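/- arXiv:2103.00509 — 2 statements merged into one kernel-verified Lean document; each statement's English description precedes it below -/
import Mathlib

section
/- Let q ≥ 1 be an integer, φ : ℝ → (0,∞) a C¹ weight with |φ'(X)/φ(X)| ≤ C₀/|X| for X ≠ 0, and let u, ε be C¹ functions with compact support in [1, ∞), with |ε(X)| ≤ η|X| and |ε'(X)| ≤ η on the support of u. Then |∫ u^{2q-1}(X) u'(X) ε(X) / (φ(X)^{2q} |X|) dX| ≤ C(C₀)·η·∫ u(X)^{2q}/(φ(X)^{2q}|X|) dX. -/
/-!
With `n = 2q`, the integrand is `(uⁿ/n)' · w` for the weight `w = ε / (φⁿ |X|)`, so integrating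
by parts moves the derivative onto `w`. On the support of `u` we have `X ≥ 1`, and
`w' = (ε' - ε (n φ'/φ + 1/X)) / (φⁿ X)`; the bounds `|ε| ≤ η X`, `|ε'| ≤ η` and
`|φ'/φ| ≤ C₀ / X` give `|w'| ≤ (n C₀ + 2) η / (φⁿ X)`. Dividing by `n ≥ 2` yields the constant
`C₀ + 1`.
-/

open Real MeasureTheory

theorem integrable_mul_of_continuousOn_tsupport {X : Type*} [TopologicalSpace X] [T2Space X]
    [MeasurableSpace X] [OpensMeasurableSpace X] {μ : Measure X} [IsFiniteMeasureOnCompacts μ]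
    {f g : X → ℝ} (hf : Continuous f) (hcs : HasCompactSupport f)
    (hg : ContinuousOn g (tsupport f)) : Integrable (fun x => f x * g x) μ :=
  (integrableOn_iff_integrable_of_support_subset
    ((Function.support_mul_subset_left f g).trans (subset_tsupport f))).1
    ((hf.continuousOn.mul hg).integrableOn_compact hcs)

theorem integral_pow_mul_deriv_mul_eq_neg {u w w' : ℝ → ℝ} {n : ℕ} (hn : n ≠ 0)
    (hu : ContDiff ℝ 1 u) (hcs : HasCompactSupport u)
    (hw : ∀ x ∈ tsupport u, HasDerivAt w (w' x) x) (hw' : ContinuousOn w' (tsupport u)) :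
    ∫ x, u x ^ (n - 1) * deriv u x * w x = -∫ x, u x ^ n / n * w' x := by
  have hV (x : ℝ) : HasDerivAt (fun x => u x ^ n / n) (u x ^ (n - 1) * deriv u x) x :=
    (((hu.differentiable one_ne_zero x).hasDerivAt.fun_pow n).div_const (n : ℝ)).congr_deriv
      (by field_simp)
  have hV0 : (0 : ℝ) ^ n / n = 0 := by simp [hn]
  have hVcs : HasCompactSupport fun x => u x ^ n / n :=
    hcs.comp_left (g := fun y : ℝ => y ^ n / n) hV0
  have hVu : tsupport (fun x => u x ^ n / n) ⊆ tsupport u :=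
    tsupport_comp_subset (g := fun y : ℝ => y ^ n / n) hV0 u
  have hV'u : tsupport (fun x => u x ^ (n - 1) * deriv u x) ⊆ tsupport u :=
    tsupport_mul_subset_right.trans tsupport_deriv_subset
  have hwc : ContinuousOn w (tsupport u) := fun x hx => (hw x hx).continuousAt.continuousWithinAt
  have hVc : Continuous fun x => u x ^ n / n := (hu.continuous.pow n).div_const _
  have hV'c : Continuous fun x => u x ^ (n - 1) * deriv u x :=
    (hu.continuous.pow _).mul (hu.continuous_deriv le_rfl)
  have := integral_mul_deriv_eq_deriv_mul_of_integrable
    (fun x _ => hV x) (fun x hx => hw x (hVu hx))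
    (integrable_mul_of_continuousOn_tsupport hVc hVcs (hw'.mono hVu))
    (integrable_mul_of_continuousOn_tsupport hV'c hcs.deriv.mul_left (hwc.mono hV'u))
    (integrable_mul_of_continuousOn_tsupport hVc hVcs (hwc.mono hVu))
  linarith

theorem integrable_pow_div_pow_mul_abs {u φ : ℝ → ℝ} {n : ℕ} (hn : n ≠ 0) (hu : Continuous u)
    (hcs : HasCompactSupport u) (hφ : Continuous φ) (hφ0 : ∀ x ∈ tsupport u, φ x ≠ 0)
    (h0 : 0 ∉ tsupport u) : Integrable fun x => u x ^ n / (φ x ^ n * |x|) := by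
  have hun : tsupport (fun x => u x ^ n) = tsupport u := by
    simp only [tsupport, Function.support_pow _ hn]
  simp_rw [div_eq_mul_inv]
  refine integrable_mul_of_continuousOn_tsupport (hu.pow n)
    (hcs.comp_left (g := fun y : ℝ => y ^ n) (zero_pow hn)) (hun ▸ fun x hx => ?_)
  have hx0 : x ≠ 0 := fun h => h0 (h ▸ hx)
  have hφx := hφ0 x hx
  exact ContinuousAt.continuousWithinAt (by fun_prop (disch := simp [hx0, hφx]))

/-- `n φ'/φ + x⁻¹` is the logarithmic derivative of `φⁿ · |x|` for `x > 0`. -/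
theorem hasDerivAt_div_pow_mul_abs {f φ : ℝ → ℝ} {f' φ' x : ℝ} (n : ℕ) (hf : HasDerivAt f f' x)
    (hφ : HasDerivAt φ φ' x) (hφx : φ x ≠ 0) (hx : 0 < x) :
    HasDerivAt (fun X => f X / (φ X ^ n * |X|))
      ((f' - f x * (n * (φ' / φ x) + x⁻¹)) / (φ x ^ n * x)) x := by
  refine (hf.fun_div ((hφ.fun_pow n).fun_mul (hasDerivAt_abs_pos hx))
    (mul_ne_zero (pow_ne_zero n hφx) (abs_pos.2 hx.ne').ne')).congr_deriv ?_
  rw [abs_of_pos hx]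
  rcases n with _ | n
  · field_simp; ring
  · field_simp
    rw [Nat.add_sub_cancel]
    ring

theorem abs_sub_mul_add_inv_le {n : ℕ} {C₀ η x e e' r : ℝ} (hx : 0 < x) (hr : |r| ≤ C₀ / x)
    (he : |e| ≤ η * x) (he' : |e'| ≤ η) : |e' - e * (n * r + x⁻¹)| ≤ (n * C₀ + 2) * η := by
  have hfactor : |n * r + x⁻¹| ≤ n * (C₀ / x) + x⁻¹ := by
    calc |n * r + x⁻¹| ≤ n * |r| + x⁻¹ := by
          simpa [abs_mul, abs_of_pos (inv_pos.2 hx)] using abs_add_le (n * r) x⁻¹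
      _ ≤ n * (C₀ / x) + x⁻¹ := by gcongr
  calc |e' - e * (n * r + x⁻¹)| ≤ |e'| + |e| * |n * r + x⁻¹| := by
        simpa [abs_mul] using abs_sub e' (e * (n * r + x⁻¹))
    _ ≤ η + η * x * (n * (C₀ / x) + x⁻¹) := by
        gcongr
        exact (abs_nonneg e).trans he
    _ = (n * C₀ + 2) * η := by field_simp; ring

theorem abs_div_mul_weight_deriv_le {n : ℕ} {C₀ η x a e e' r p : ℝ} (hn : 2 ≤ n) (hη : 0 ≤ η)
    (ha : 0 ≤ a) (hx : 0 < x) (hp : 0 < p) (hr : |r| ≤ C₀ / x) (he : |e| ≤ η * x)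
    (he' : |e'| ≤ η) :
    |a / n * ((e' - e * (n * r + x⁻¹)) / (p ^ n * x))| ≤ (C₀ + 1) * η * (a / (p ^ n * x)) := by
  have hn' : (2 : ℝ) ≤ n := by exact_mod_cast hn
  have hden : 0 < p ^ n * x := by positivity
  calc |a / n * ((e' - e * (n * r + x⁻¹)) / (p ^ n * x))|
      = a / n * (|e' - e * (n * r + x⁻¹)| / (p ^ n * x)) := by
        rw [abs_mul, abs_of_nonneg (by positivity : 0 ≤ a / n), abs_div, abs_of_pos hden]
    _ ≤ a / n * ((n * C₀ + 2) * η / (p ^ n * x)) := by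
        gcongr
        exact abs_sub_mul_add_inv_le hx hr he he'
    _ = (C₀ + 2 / n) * η * (a / (p ^ n * x)) := by field_simp [show (n : ℝ) ≠ 0 by linarith]
    _ ≤ (C₀ + 1) * η * (a / (p ^ n * x)) := by
        gcongr
        rwa [div_le_one (by linarith)]

/-- Integration-by-parts estimate for the transport nonlinearity (term `I₂`). -/
theorem transport_nonlinearity_estimate
    (C₀ : ℝ) (hC₀ : 0 < C₀) :
    ∃ C > 0, ∀ (q : ℕ), 1 ≤ q → ∀ (φ u ε : ℝ → ℝ) (η : ℝ), 0 ≤ η →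
      (∀ X, 0 < φ X) → ContDiff ℝ 1 φ →
      (∀ X : ℝ, X ≠ 0 → |deriv φ X / φ X| ≤ C₀ / |X|) →
      ContDiff ℝ 1 u → HasCompactSupport u → tsupport u ⊆ Set.Ici 1 →
      ContDiff ℝ 1 ε → HasCompactSupport ε → tsupport ε ⊆ Set.Ici 1 →
      (∀ X ∈ tsupport u, |ε X| ≤ η * |X| ∧ |deriv ε X| ≤ η) →
      |∫ X : ℝ, u X ^ (2 * q - 1) * deriv u X * ε X / (φ X ^ (2 * q) * |X|)|
        ≤ C * η * ∫ X : ℝ, u X ^ (2 * q) / (φ X ^ (2 * q) * |X|) := by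
  refine ⟨C₀ + 1, by linarith,
    fun q hq φ u ε η hη hφpos hφ hφ' hu hucs husupp hε _ _ hbd => ?_⟩
  set n := 2 * q
  have hn0 : n ≠ 0 := by omega
  have hpos : ∀ x ∈ tsupport u, 0 < x := fun x hx => zero_lt_one.trans_le (husupp hx)
  set w' := fun x => (deriv ε x - ε x * (n * (deriv φ x / φ x) + x⁻¹)) / (φ x ^ n * x)
  have hw : ∀ x ∈ tsupport u, HasDerivAt (fun X => ε X / (φ X ^ n * |X|)) (w' x) x :=
    fun x hx => hasDerivAt_div_pow_mul_abs n (hε.differentiable one_ne_zero x).hasDerivAt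
      (hφ.differentiable one_ne_zero x).hasDerivAt (hφpos x).ne' (hpos x hx)
  have hw' : ContinuousOn w' (tsupport u) := fun x hx => by
    have hx0 := hpos x hx; have hφx := hφpos x
    have hεc := hε.continuous; have hε'c := hε.continuous_deriv le_rfl
    have hφc := hφ.continuous; have hφ'c := hφ.continuous_deriv le_rfl
    exact ContinuousAt.continuousWithinAt (by fun_prop (disch := positivity))
  have hbound (x : ℝ) : ‖u x ^ n / n * w' x‖ ≤ (C₀ + 1) * η * (u x ^ n / (φ x ^ n * |x|)) := by
    by_cases hx : x ∈ tsupport u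
    · have hx0 := hpos x hx
      have hφx := hφ' x hx0.ne'
      obtain ⟨hεx, hε'x⟩ := hbd x hx
      rw [abs_of_pos hx0] at hφx hεx ⊢
      exact abs_div_mul_weight_deriv_le (by omega) hη ((even_two_mul q).pow_nonneg _) hx0
        (hφpos x) hφx hεx hε'x
    · simp [image_eq_zero_of_notMem_tsupport hx, hn0]
  simp_rw [mul_div_assoc]
  rw [integral_pow_mul_deriv_mul_eq_neg hn0 hu hucs hw hw', abs_neg, ← integral_const_mul]
  refine norm_integral_le_of_norm_le (Integrable.const_mul ?_ _) (ae_of_all _ hbound)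
  exact integrable_pow_div_pow_mul_abs hn0 hu.continuous hucs hφ.continuous
    (fun x _ => (hφpos x).ne') fun h0 => (hpos 0 h0).false
end

section
/- Let i₁ ≥ 1, α₁ = 1 + 1/(2i₁), δ ∈ (0,1), and let κ ∈ (0, 1/2). Suppose ε : [s₀,∞) × ℝ → ℝ (s₀ = -log δ) satisfies |ε(s,X)| ≤ 2C_K δ^{1/(2i₁)} e^{(α₁ - 1/2 + κ)s} for X in the support region. If Φ : [s₀,∞) → ℝ solves Φ'(s) ≥ Φ(s) - 2C_K δ^{1/(2i₁)} e^{(α₁ - 1/2 + κ)s} with Φ(s₀) = X₀ and (4/3)δ^{-1} ≤ X₀ ≤ (5/3)δ^{-1}, then provided α₁ - 3/2 + κ < 0 and δ is small enough, Φ(s) ≥ e^s for all s ≥ s₀. -/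
open Real

/-- Lower bound part of the support propagation (Proposition 4.2). -/
theorem support_lower_bound
    (i₁ : ℕ) (hi₁ : 1 ≤ i₁) (κ C_K : ℝ) (hκ0 : 0 < κ) (hκ1 : κ < 1 / 2) (hCK : 0 < C_K)
    (hexp : (1 + 1 / (2 * (i₁ : ℝ))) - 3 / 2 + κ < 0) :
    ∃ δ₀ > 0, ∀ δ : ℝ, 0 < δ → δ < δ₀ →
      ∀ (Φ Φ' : ℝ → ℝ) (X₀ : ℝ),
        (∀ s ≥ -Real.log δ, HasDerivAt Φ (Φ' s) s) →
        (∀ s ≥ -Real.log δ,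
          Φ' s ≥ Φ s - 2 * C_K * δ ^ ((1 : ℝ) / (2 * (i₁ : ℝ))) *
            Real.exp (((1 + 1 / (2 * (i₁ : ℝ))) - 1 / 2 + κ) * s)) →
        Φ (-Real.log δ) = X₀ →
        (4 / 3) * δ⁻¹ ≤ X₀ → X₀ ≤ (5 / 3) * δ⁻¹ →
        ∀ s ≥ -Real.log δ, Real.exp s ≤ Φ s := by
  have hi : (0:ℝ) < 2 * (i₁ : ℝ) := by
    have : (1:ℝ) ≤ (i₁ : ℝ) := by exact_mod_cast hi₁
    linarith
  set p : ℝ := (1 : ℝ) / (2 * (i₁ : ℝ)) with hp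
  set β : ℝ := (1 + 1 / (2 * (i₁ : ℝ))) - 3 / 2 + κ with hβ
  have hβneg : β < 0 := hexp
  have hpβ : p - β = 1/2 - κ := by rw [hp, hβ]; ring
  set t : ℝ := min 1 ((-β) / (6 * C_K)) with ht
  have ht0 : 0 < t := lt_min one_pos (div_pos (neg_pos.2 hβneg) (by positivity))
  refine ⟨min 1 (t ^ ((2:ℝ) / (1 - 2*κ))), lt_min one_pos (rpow_pos_of_pos ht0 _), ?_⟩
  intro δ hδ0 hδlt Φ Φ' X₀ hderiv hode hΦ0 hX₀l hX₀u
  have hδ1 : δ < 1 := lt_of_lt_of_le hδlt (min_le_left _ _)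
  -- key smallness: δ^(1/2-κ) < t ≤ (-β)/(6 C_K)
  have hsmall : δ ^ ((1:ℝ)/2 - κ) < t := by
    have h1 : δ < t ^ ((2:ℝ) / (1 - 2*κ)) := lt_of_lt_of_le hδlt (min_le_right _ _)
    have h2 : δ ^ ((1:ℝ)/2 - κ) < (t ^ ((2:ℝ) / (1 - 2*κ))) ^ ((1:ℝ)/2 - κ) :=
      Real.rpow_lt_rpow (le_of_lt hδ0) h1 (by linarith)
    rw [← Real.rpow_mul (le_of_lt ht0)] at h2
    have he : (2:ℝ) / (1 - 2*κ) * ((1:ℝ)/2 - κ) = 1 := by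
      have hne : (0:ℝ) < 2*(1 - 2*κ) := by linarith
      field_simp
      exact div_self (ne_of_gt (by linarith))
    rwa [he, Real.rpow_one] at h2
  set s₀ : ℝ := -Real.log δ with hs₀
  set D : ℝ := δ ^ p with hD
  have hD0 : 0 < D := rpow_pos_of_pos hδ0 p
  have hβne : β ≠ 0 := ne_of_lt hβneg
  set c : ℝ := 2 * C_K * D / (-β) with hc
  have hc0 : 0 < c := by
    apply div_pos (by positivity) (neg_pos.2 hβneg)
  set g : ℝ → ℝ := fun s => Φ s * Real.exp (-s) - c * Real.exp (β * s) with hg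
  -- derivative of g
  have hgderiv : ∀ s ∈ Set.Ici s₀, HasDerivAt g
      (Φ' s * Real.exp (-s) + Φ s * (Real.exp (-s) * (-1)) - c * (Real.exp (β * s) * β)) s := by
    intro s hs
    have h1 : HasDerivAt (fun s : ℝ => Real.exp (-s)) (Real.exp (-s) * (-1)) s :=
      ((hasDerivAt_id s).neg.exp).congr_deriv (by simp)
    have h2 : HasDerivAt (fun s : ℝ => Real.exp (β * s)) (Real.exp (β * s) * β) s := by
      have := (((hasDerivAt_id s).const_mul β).exp)
      simpa [mul_comm] using this
    exact ((hderiv s hs).mul h1).sub (h2.const_mul c)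
  -- g is monotone on [s₀, ∞)
  have hmono : MonotoneOn g (Set.Ici s₀) := by
    apply monotoneOn_of_deriv_nonneg (convex_Ici s₀)
    · intro s hs
      exact (hgderiv s hs).continuousAt.continuousWithinAt
    · intro s hs
      rw [interior_Ici] at hs
      exact (hgderiv s (show s₀ ≤ s from le_of_lt hs)).differentiableAt.differentiableWithinAt
    · intro s hs
      rw [interior_Ici] at hs
      have hsge : s ≥ s₀ := le_of_lt hs
      rw [(hgderiv s hsge).deriv]
      have hode' := hode s hsge
      have hkey : Φ' s ≥ Φ s - 2 * C_K * D * Real.exp ((β + 1) * s) := by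
        have : (1 + 1 / (2 * (i₁ : ℝ))) - 1 / 2 + κ = β + 1 := by rw [hβ]; ring
        rw [← this]; exact hode'
      have hcβ : c * (-β) = 2 * C_K * D := by
        rw [hc]; field_simp
      have hexps : Real.exp ((β + 1) * s) * Real.exp (-s) = Real.exp (β * s) := by
        rw [← Real.exp_add]; ring_nf
      have hA : -(2*C_K*D) * Real.exp (β * s) ≤ (Φ' s - Φ s) * Real.exp (-s) := by
        calc -(2*C_K*D) * Real.exp (β * s)
            = -(2*C_K*D*Real.exp ((β+1)*s)) * Real.exp (-s) := by rw [← hexps]; ring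
          _ ≤ (Φ' s - Φ s) * Real.exp (-s) :=
              mul_le_mul_of_nonneg_right (by linarith) (le_of_lt (Real.exp_pos _))
      have h7 : c * (Real.exp (β * s) * β) = -(2*C_K*D) * Real.exp (β * s) := by
        rw [show c * (Real.exp (β * s) * β) = -(c * (-β)) * Real.exp (β * s) from by ring, hcβ]
      have expand : (Φ' s - Φ s) * Real.exp (-s)
          = Φ' s * Real.exp (-s) + Φ s * (Real.exp (-s) * (-1)) := by ring
      linarith [hA, h7, expand]
  -- evaluate g at s₀
  have hexpβs₀ : Real.exp (β * s₀) = δ ^ (-β) := by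
    rw [hs₀, Real.rpow_def_of_pos hδ0]
    ring_nf
  have hgs₀ : g s₀ = δ * X₀ - c * δ ^ (-β) := by
    rw [hg]
    simp only
    rw [hΦ0, hs₀, neg_neg, Real.exp_log hδ0, hexpβs₀]
    ring_nf
  -- bound the error term
  have herr : c * δ ^ (-β) < 1/3 := by
    have h1 : c * δ ^ (-β) = 2 * C_K * (δ ^ ((1:ℝ)/2 - κ)) / (-β) := by
      rw [hc, hD, div_mul_eq_mul_div, mul_assoc, ← Real.rpow_add hδ0]
      rw [show p + -β = 1/2 - κ from by linarith]
    rw [h1]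
    have ht2 : t ≤ (-β) / (6 * C_K) := min_le_right _ _
    have h2 : δ ^ ((1:ℝ)/2 - κ) < (-β) / (6 * C_K) := lt_of_lt_of_le hsmall ht2
    rw [div_lt_iff₀ (neg_pos.2 hβneg)]
    have := mul_lt_mul_of_pos_left h2 (by positivity : (0:ℝ) < 2 * C_K)
    calc 2 * C_K * δ ^ ((1:ℝ)/2 - κ) < 2 * C_K * ((-β) / (6 * C_K)) := this
      _ = 1/3 * (-β) := by field_simp; ring
  have hδX₀ : 4/3 ≤ δ * X₀ := by
    have := mul_le_mul_of_nonneg_left hX₀l (le_of_lt hδ0)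
    have h3 : δ * (4/3 * δ⁻¹) = 4/3 := by
      rw [mul_comm, mul_assoc, inv_mul_cancel₀ (ne_of_gt hδ0), mul_one]
    linarith [h3 ▸ this]
  -- conclude
  intro s hs
  have hgs : g s₀ ≤ g s := hmono (Set.self_mem_Ici) hs hs
  have h4 : 1 ≤ Φ s * Real.exp (-s) := by
    have hpos : 0 ≤ c * Real.exp (β * s) :=
      le_of_lt (mul_pos hc0 (Real.exp_pos _))
    have h5 : g s = Φ s * Real.exp (-s) - c * Real.exp (β * s) := rfl
    have h6 : (1:ℝ) ≤ g s₀ := by rw [hgs₀]; linarith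
    have h7 : g s₀ ≤ g s := hgs
    linarith
  calc Real.exp s = Real.exp s * 1 := (mul_one _).symm
    _ ≤ Real.exp s * (Φ s * Real.exp (-s)) :=
        mul_le_mul_of_nonneg_left h4 (le_of_lt (Real.exp_pos s))
    _ = Φ s := by rw [← mul_assoc, mul_comm (Real.exp s) (Φ s), mul_assoc,
        ← Real.exp_add, add_neg_cancel, Real.exp_zero, mul_one]
end
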